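/- The cyclic shift of blocks β, defined on words w = B_1 B_2 ... B_N (with blocks B_i) by β(w) = B_2 ... B_N B_1, generates a group of permutations {Id, β, ..., β^{N-1}} of the blocks, and for any word w in W_n (primitive, beginning with a run of its smallest letter, ending with a different letter), all N words in the block orbit ⟨w⟩_β are distinct. -/

import Mathlib

open List

variable {A : Type*}

/-- A word is primitive if it is nonempty and not a power `u^r` with `r ≥ 2`. -/
def Primitive (w : List A) : Prop :=
  w ≠ [] ∧ ∀ (u : List A) (r : ℕ), 2 ≤ r → w ≠ (List.replicate r u).flatten

/-- A block with respect to the letter `a`: an initial run of `a`'s followed by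
a nonempty word containing no `a`. -/
def IsBlock (a : A) (B : List A) : Prop :=
  ∃ (k : ℕ) (t : List A), 0 < k ∧ t ≠ [] ∧ a ∉ t ∧ B = List.replicate k a ++ t

/-- `Bs` is the block decomposition of `w` with respect to the letter `a`. -/
def IsBlockDecomp (a : A) (Bs : List (List A)) (w : List A) : Prop :=
  w = Bs.flatten ∧ ∀ B ∈ Bs, IsBlock a B

/-- `a` is the smallest letter of the word `w`. -/
def Smallest [LinearOrder A] (a : A) (w : List A) : Prop :=
  a ∈ w ∧ ∀ b ∈ w, a ≤ b

/-!
Rotating the block list by `i` rotates `w` by the total length of the first `i` blocks. As blocks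
are nonempty, these lengths are strictly increasing in `i` and stay below `|w|`, so it suffices
that distinct rotations of `w` by less than `|w|` differ. A rotation by `0 < d < |w|` fixing `w`
would, by Bézout, give one by `g = gcd d |w|`, and then `w` commutes with its prefix of length
`g`, which makes `w` the `|w| / g`-th power of that prefix, contradicting primitivity.
-/

theorem List.eq_flatten_replicate_of_append_comm {u v : List A} (h : v ++ u = u ++ v) {k : ℕ}
    (hlen : v.length = k * u.length) : v = (replicate k u).flatten := by
  induction k generalizing v with
  | zero => simpa using hlen
  | succ k ih =>
    obtain ⟨htake, hdrop⟩ : v.take u.length = u ∧ v.drop u.length ++ u = v := by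
      refine append_inj ?_ (by simp [hlen, Nat.succ_mul])
      rwa [← append_assoc, take_append_drop]
    have hcomm : v.drop u.length ++ u = u ++ v.drop u.length := by
      rw [hdrop]; nth_rw 1 [← take_append_drop u.length v, htake]
    rw [replicate_succ, flatten_cons, ← ih hcomm (by simp [hlen, Nat.succ_mul])]
    conv_lhs => rw [← take_append_drop u.length v, htake]

theorem List.rotate_mul_eq_self {w : List A} {d : ℕ} (hd : w.rotate d = w) (m : ℕ) :
    w.rotate (d * m) = w := by
  induction m with
  | zero => simp
  | succ m ih => rw [Nat.mul_succ, ← rotate_rotate, ih, hd]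

theorem Primitive.rotate_ne_self {w : List A} (hw : Primitive w) {d : ℕ} (hd : 0 < d)
    (hdw : d < w.length) : w.rotate d ≠ w := by
  intro hrot
  obtain ⟨m, -, hm⟩ := Nat.exists_mul_mod_eq_gcd (lt_of_le_of_lt (Nat.gcd_le_left _ hd) hdw)
  obtain ⟨r, hr⟩ := Nat.gcd_dvd_right d w.length
  set g := d.gcd w.length
  have hgd : g ≤ d := Nat.gcd_le_left _ hd
  have hrotg : w.rotate g = w := by
    rw [← hm, rotate_mod, rotate_mul_eq_self hrot]
  have hcomm : w ++ w.take g = w.take g ++ w :=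
    calc w ++ w.take g = w.take g ++ (w.drop g ++ w.take g) := by
          rw [← append_assoc, take_append_drop]
      _ = w.take g ++ w := by rw [← rotate_eq_drop_append_take (by omega), hrotg]
  have hr2 : 2 ≤ r := by
    by_contra! hr'
    interval_cases r <;> omega
  refine hw.2 (w.take g) r hr2 (eq_flatten_replicate_of_append_comm hcomm ?_)
  rw [length_take_of_le (by omega), hr, mul_comm]

theorem Primitive.rotate_injOn {w : List A} (hw : Primitive w) :
    Set.InjOn w.rotate (Set.Iio w.length) := by
  suffices ∀ d e, d < e → e < w.length → w.rotate d ≠ w.rotate e by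
    intro d hd e he hde
    by_contra hne
    rcases Nat.lt_or_gt_of_ne hne with h | h
    · exact this d e h he hde
    · exact this e d h hd hde.symm
  intro d e hde he hrot
  refine hw.rotate_ne_self (d := e - d) (by omega) (by omega) ((rotate_eq_rotate (n := d)).mp ?_)
  rw [rotate_rotate, Nat.sub_add_cancel hde.le, hrot]

theorem List.flatten_rotate {Bs : List (List A)} {i : ℕ} (hi : i ≤ Bs.length) :
    (Bs.rotate i).flatten = Bs.flatten.rotate (Bs.take i).flatten.length := by
  have h := rotate_append_length_eq (Bs.take i).flatten (Bs.drop i).flatten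
  rw [← flatten_append, take_append_drop] at h
  rw [rotate_eq_drop_append_take hi, flatten_append, h]

theorem List.strictMonoOn_length_flatten_take {Bs : List (List A)} (hBs : ∀ B ∈ Bs, B ≠ []) :
    StrictMonoOn (fun i => (Bs.take i).flatten.length) (Set.Iic Bs.length) := by
  intro i _ j hj hij
  have hi : i < Bs.length := lt_of_lt_of_le hij hj
  calc (Bs.take i).flatten.length
      < (Bs.take (i + 1)).flatten.length := by
        rw [take_add_one, getElem?_eq_getElem hi, flatten_append]
        simpa [length_pos_iff] using hBs _ (getElem_mem hi)
    _ ≤ (Bs.take j).flatten.length := ((take_prefix_take_left hij).flatten).length_le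

theorem Primitive.flatten_rotate_injOn {Bs : List (List A)} (hw : Primitive Bs.flatten)
    (hBs : ∀ B ∈ Bs, B ≠ []) :
    Set.InjOn (fun i => (Bs.rotate i).flatten) (Set.Iio Bs.length) := by
  have hmono := strictMonoOn_length_flatten_take hBs
  have hlt : ∀ i < Bs.length, (Bs.take i).flatten.length < Bs.flatten.length := fun i hi => by
    simpa using hmono (Set.mem_Iic.2 hi.le) (Set.mem_Iic.2 le_rfl) hi
  intro i hi j hj hij
  simp only [flatten_rotate (le_of_lt hi), flatten_rotate (le_of_lt hj)] at hij
  exact hmono.injOn (Set.mem_Iic.2 (le_of_lt hi)) (Set.mem_Iic.2 (le_of_lt hj))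
    (hw.rotate_injOn (hlt i hi) (hlt j hj) hij)

theorem IsBlock.ne_nil {a : A} {B : List A} (hB : IsBlock a B) : B ≠ [] := by
  obtain ⟨k, t, hk, -, -, rfl⟩ := hB
  simp [hk.ne']

theorem stmt_2_general (w : List A) (a : A) (Bs : List (List A))
    (hdec : IsBlockDecomp a Bs w) (hprim : Primitive w) :
    Bs.rotate Bs.length = Bs ∧
    ∀ i j, i < Bs.length → j < Bs.length →
      (Bs.rotate i).flatten = (Bs.rotate j).flatten → i = j := by
  obtain ⟨rfl, hblocks⟩ := hdec
  exact ⟨rotate_length Bs, fun i j hi hj hij =>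
    hprim.flatten_rotate_injOn (fun B hB => (hblocks B hB).ne_nil) hi hj hij⟩

/-- The cyclic shift of blocks generates a cyclic group (shifting by `N` is the
identity), and for a word in `W_n` all `N` words of its block orbit are distinct. -/
theorem stmt_2 [LinearOrder A] (w : List A) (a : A) (Bs : List (List A))
    (ha : Smallest a w) (hdec : IsBlockDecomp a Bs w) (hprim : Primitive w) :
    Bs.rotate Bs.length = Bs ∧
    ∀ i j, i < Bs.length → j < Bs.length →
      (Bs.rotate i).flatten = (Bs.rotate j).flatten → i = j :=
  stmt_2_general w a Bs hdec hprim
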